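/- arXiv:2604.26104 — 3 statements merged into one kernel-verified Lean document; each statement's English description precedes it below -/
import Mathlib

section
/- Let G be a topological group with small invariant neighborhoods (SIN) and let φ : G → ℂ be a continuous positive-definite function with φ(1) = 1. Then every element of the closed convex hull (in the product topology on ℂ^G) of the conjugation orbit {φ^g : g ∈ G}, where φ^g(h) = φ(ghg⁻¹), is a continuous function on G. -/
open scoped ComplexOrder

def IsPositiveDefinite {G : Type*} [Group G] (φ : G → ℂ) : Prop :=
  ∀ (n : ℕ) (c : Fin n → ℂ) (g : Fin n → G),
    0 ≤ ∑ i, ∑ j, c i * (starRingEnd ℂ) (c j) * φ ((g j)⁻¹ * g i)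

def HasSIN (G : Type*) [Group G] [TopologicalSpace G] : Prop :=
  ∀ U ∈ nhds (1 : G), ∃ V ∈ nhds (1 : G), V ⊆ U ∧
    ∀ g : G, (fun x => g * x * g⁻¹) '' V = V

lemma pd_herm {G : Type*} [Group G] (φ : G → ℂ) (hpd : IsPositiveDefinite φ)
    (hone : φ 1 = 1) (x : G) : φ x⁻¹ = (starRingEnd ℂ) (φ x) := by
  have h1 := hpd 2 ![1, 1] ![1, x]
  have h2 := hpd 2 ![1, Complex.I] ![1, x]
  simp [Fin.sum_univ_two, hone, Complex.le_def, Complex.ext_iff, Complex.I_re,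
    Complex.I_im] at h1 h2 ⊢
  constructor <;> linarith [h1.2, h2.2]

lemma pd_key {G : Type*} [Group G] (φ : G → ℂ) (hpd : IsPositiveDefinite φ)
    (hone : φ 1 = 1) (x y : G) :
    ‖φ x - φ y‖ ^ 2 ≤ 2 * (1 - (φ (y⁻¹ * x)).re) := by
  have h := hpd 3 ![φ x - φ y, -1, 1] ![1, x, y]
  have hx := pd_herm φ hpd hone x
  have hy := pd_herm φ hpd hone y
  have hxy : φ (x⁻¹ * y) = (starRingEnd ℂ) (φ (y⁻¹ * x)) := by
    rw [← pd_herm φ hpd hone, mul_inv_rev, inv_inv]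
  have hnorm : ‖φ x - φ y‖ ^ 2 = (φ x - φ y).re ^ 2 + (φ x - φ y).im ^ 2 := by
    rw [Complex.sq_norm, Complex.normSq_apply]; ring
  simp [Fin.sum_univ_three, hone, hx, hy, hxy, Complex.le_def, Complex.ext_iff] at h
  rw [hnorm]
  simp only [Complex.sub_re, Complex.sub_im] at *
  nlinarith [h.1]

theorem continuity_on_cconv_orbit {G : Type*} [Group G] [TopologicalSpace G]
    [IsTopologicalGroup G] (hSIN : HasSIN G) (φ : G → ℂ) (hcont : Continuous φ)
    (hpd : IsPositiveDefinite φ) (hone : φ 1 = 1) :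
    ∀ ψ ∈ closure (convexHull ℝ {ψ : G → ℂ | ∃ g : G, ψ = fun h => φ (g * h * g⁻¹)}),
      Continuous ψ := by
  set T := closure (convexHull ℝ {ψ : G → ℂ | ∃ g : G, ψ = fun h => φ (g * h * g⁻¹)})
    with hT
  have hequi : ∀ ε > (0 : ℝ), ∃ V ∈ nhds (1 : G),
      ∀ ψ' ∈ T, ∀ x y : G, y⁻¹ * x ∈ V → ‖ψ' x - ψ' y‖ ≤ ε := by
    intro ε hε
    have hU : (φ ⁻¹' {z | 1 - ε ^ 2 / 2 < z.re}) ∈ nhds (1 : G) := by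
      apply hcont.continuousAt.preimage_mem_nhds
      refine (isOpen_lt continuous_const Complex.continuous_re).mem_nhds ?_
      simp only [Set.mem_setOf_eq, hone, Complex.one_re]
      nlinarith
    obtain ⟨V, hV, hVU, hVinv⟩ := hSIN _ hU
    refine ⟨V, hV, ?_⟩
    set S := {ψ' : G → ℂ | ∀ x y : G, y⁻¹ * x ∈ V → ‖ψ' x - ψ' y‖ ≤ ε} with hS
    have hSconv : Convex ℝ S := by
      intro f hf g hg a b ha hb hab
      intro x y hxy
      have h1 := hf x y hxy
      have h2 := hg x y hxy
      have : (a • f + b • g) x - (a • f + b • g) y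
          = a • (f x - f y) + b • (g x - g y) := by
        simp [smul_sub]; ring
      rw [this]
      calc ‖a • (f x - f y) + b • (g x - g y)‖
          ≤ ‖a • (f x - f y)‖ + ‖b • (g x - g y)‖ := norm_add_le _ _
        _ = a * ‖f x - f y‖ + b * ‖g x - g y‖ := by
            rw [norm_smul, norm_smul, Real.norm_eq_abs, Real.norm_eq_abs,
              abs_of_nonneg ha, abs_of_nonneg hb]
        _ ≤ a * ε + b * ε := by
            gcongr
        _ = ε := by rw [← add_mul, hab, one_mul]
    have hSclosed : IsClosed S := by
      have : S = ⋂ (x : G), ⋂ (y : G), ⋂ (_ : y⁻¹ * x ∈ V),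
          {ψ' : G → ℂ | ‖ψ' x - ψ' y‖ ≤ ε} := by
        ext ψ'; simp [hS]
      rw [this]
      exact isClosed_iInter fun x => isClosed_iInter fun y => isClosed_iInter fun _ =>
        isClosed_le (((continuous_apply x).sub (continuous_apply y)).norm)
          continuous_const
    have horb : {ψ : G → ℂ | ∃ g : G, ψ = fun h => φ (g * h * g⁻¹)} ⊆ S := by
      rintro _ ⟨g, rfl⟩ x y hxy
      have hmem : g * (y⁻¹ * x) * g⁻¹ ∈ V := by
        rw [← hVinv g]; exact ⟨y⁻¹ * x, hxy, rfl⟩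
      have hre : 1 - ε ^ 2 / 2 < (φ (g * (y⁻¹ * x) * g⁻¹)).re := hVU hmem
      have hkey := pd_key φ hpd hone (g * x * g⁻¹) (g * y * g⁻¹)
      have harg : (g * y * g⁻¹)⁻¹ * (g * x * g⁻¹) = g * (y⁻¹ * x) * g⁻¹ := by group
      rw [harg] at hkey
      nlinarith [norm_nonneg (φ (g * x * g⁻¹) - φ (g * y * g⁻¹))]
    exact fun ψ' h => closure_minimal (convexHull_min horb hSconv) hSclosed h
  intro ψ hψ
  rw [continuous_iff_continuousAt]
  intro x₀
  rw [ContinuousAt, Metric.tendsto_nhds]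
  intro ε hε
  obtain ⟨V, hV, hbound⟩ := hequi (ε / 2) (by positivity)
  have hnbd : {x | x₀⁻¹ * x ∈ V} ∈ nhds x₀ := by
    have hc : ContinuousAt (fun x => x₀⁻¹ * x) x₀ :=
      (continuous_const.mul continuous_id).continuousAt
    have := hc.preimage_mem_nhds (by simpa using hV)
    exact this
  filter_upwards [hnbd] with x hx
  have := hbound ψ hψ x x₀ hx
  rw [dist_eq_norm]
  linarith
end

section
/- Let F be a field, let m, n be positive integers, let ι : Mₙ(F) → M_{mn}(F) be a unital F-algebra homomorphism, and let R be a unital F-algebra isomorphic to M_{mn}(F). Then for every unital F-algebra homomorphism φ : Mₙ(F) → R there exists an F-algebra isomorphism ψ : M_{mn}(F) → R with ψ ∘ ι = φ. -/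
open Matrix

private theorem sn_sum_diag_std {F : Type*} [Field F] {n : ℕ} [NeZero n] :
    (∑ i : Fin n, Matrix.single i i (1:F)) = 1 := by
  ext a b
  rw [Matrix.sum_apply]
  rcases eq_or_ne a b with rfl | h
  · simp [Matrix.single, Matrix.one_apply]
  · rw [Matrix.one_apply_ne h, Finset.sum_eq_zero]
    intro x _
    simp only [Matrix.single, of_apply]
    rw [if_neg]
    rintro ⟨rfl, rfl⟩
    exact h rfl

private theorem sn_key {F : Type*} [Field F] {n : ℕ} (hn : 0 < n)
    (V : Type*) [AddCommGroup V] [Module F V] [FiniteDimensional F V]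
    (f g : Matrix (Fin n) (Fin n) F →ₐ[F] Module.End F V) :
    ∃ T : V ≃ₗ[F] V, ∀ a v, T (f a v) = g a (T v) := by
  haveI : NeZero n := ⟨hn.ne'⟩
  let E : Fin n → Fin n → Matrix (Fin n) (Fin n) F := fun i j => Matrix.single i j 1
  have hmul : ∀ i j k l, E i j * E k l = if j = k then E i l else 0 := by
    intro i j k l
    rcases eq_or_ne j k with rfl | h
    · rw [if_pos rfl]
      simp [E]
    · rw [if_neg h]
      exact Matrix.single_mul_single_of_ne (c := 1) (i := i) (j := j) (k := k) h 1
  have hsumE : (∑ i, E i i) = 1 := sn_sum_diag_std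
  have happ : ∀ (h : Matrix (Fin n) (Fin n) F →ₐ[F] Module.End F V) i j k l (v : V),
      h (E i j) (h (E k l) v) = if j = k then h (E i l) v else 0 := by
    intro h i j k l v
    rw [← Module.End.mul_apply, ← _root_.map_mul, hmul]
    split <;> simp
  set W₁ := LinearMap.range (f (E 0 0)) with hW₁
  set W₂ := LinearMap.range (g (E 0 0)) with hW₂
  have fix₁ : ∀ w ∈ W₁, f (E 0 0) w = w := by
    rintro w ⟨x, rfl⟩; rw [happ]; simp
  have fix₂ : ∀ w ∈ W₂, g (E 0 0) w = w := by
    rintro w ⟨x, rfl⟩; rw [happ]; simp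
  have hmem₁ : ∀ i (v : V), f (E 0 i) v ∈ W₁ := fun i v =>
    ⟨f (E 0 i) v, by rw [happ]; simp⟩
  have hmem₂ : ∀ i (v : V), g (E 0 i) v ∈ W₂ := fun i v =>
    ⟨g (E 0 i) v, by rw [happ]; simp⟩
  -- dimension count : V ≃ (Fin n → W) for both structures
  have dimeq : ∀ (h : Matrix (Fin n) (Fin n) F →ₐ[F] Module.End F V)
      (_ : ∀ w ∈ LinearMap.range (h (E 0 0)), h (E 0 0) w = w)
      (_ : ∀ i (v : V), h (E 0 i) v ∈ LinearMap.range (h (E 0 0))),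
      Module.finrank F V = n * Module.finrank F (LinearMap.range (h (E 0 0))) := by
    intro h fix hmem
    set W := LinearMap.range (h (E 0 0))
    let fwd : V →ₗ[F] (Fin n → W) :=
      LinearMap.pi (fun i => (h (E 0 i)).codRestrict W (hmem i))
    let bwd : (Fin n → W) →ₗ[F] V :=
      ∑ i, (h (E i 0)) ∘ₗ W.subtype ∘ₗ LinearMap.proj i
    have h1 : bwd ∘ₗ fwd = LinearMap.id := by
      apply LinearMap.ext; intro v
      simp only [LinearMap.comp_apply, LinearMap.id_apply, bwd, LinearMap.sum_apply,
        LinearMap.proj_apply, Submodule.subtype_apply, fwd, LinearMap.pi_apply,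
        LinearMap.codRestrict_apply]
      have hterm : ∀ i : Fin n, i ∈ Finset.univ →
          h (E i 0) (h (E 0 i) v) = h (E i i) v := fun i _ => by rw [happ]; simp
      rw [Finset.sum_congr rfl hterm, ← LinearMap.sum_apply, ← map_sum,
        hsumE, _root_.map_one, Module.End.one_apply]
    have h2 : fwd ∘ₗ bwd = LinearMap.id := by
      apply LinearMap.ext; intro u
      funext i
      apply Subtype.ext
      simp only [LinearMap.comp_apply, LinearMap.id_apply, fwd, LinearMap.pi_apply,
        LinearMap.codRestrict_apply, bwd, LinearMap.sum_apply, LinearMap.proj_apply,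
        Submodule.subtype_apply]
      rw [_root_.map_sum]
      have hterm : ∀ j : Fin n, j ∈ Finset.univ →
          h (E 0 i) (h (E j 0) (u j : V)) = if i = j then (u i : V) else 0 := by
        intro j _
        rw [happ]
        rcases eq_or_ne i j with rfl | hij
        · simp [fix _ (u i).2]
        · simp [hij]
      rw [Finset.sum_congr rfl hterm, Finset.sum_ite_eq]
      simp
    let eqv : V ≃ₗ[F] (Fin n → W) := LinearEquiv.ofLinear fwd bwd h2 h1
    rw [eqv.finrank_eq, Module.finrank_pi_fintype]
    simp [mul_comm]
  have hdim : Module.finrank F W₁ = Module.finrank F W₂ :=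
    Nat.eq_of_mul_eq_mul_left hn ((dimeq f fix₁ hmem₁).symm.trans (dimeq g fix₂ hmem₂))
  let σ : W₁ ≃ₗ[F] W₂ := LinearEquiv.ofFinrankEq _ _ hdim
  let ρ₁ : V →ₗ[F] W₁ := (f (E 0 0)).codRestrict W₁ (fun v => ⟨v, rfl⟩)
  let ρ₂ : V →ₗ[F] W₂ := (g (E 0 0)).codRestrict W₂ (fun v => ⟨v, rfl⟩)
  let sig : Module.End F V := W₂.subtype ∘ₗ σ.toLinearMap ∘ₗ ρ₁
  let sig' : Module.End F V := W₁.subtype ∘ₗ σ.symm.toLinearMap ∘ₗ ρ₂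
  have hc1 : ∀ v, sig' (g (E 0 0) (sig v)) = f (E 0 0) v := by
    intro v
    simp only [sig, sig', LinearMap.comp_apply, Submodule.subtype_apply, LinearEquiv.coe_coe]
    have m2 : g (E 0 0) ((σ (ρ₁ v) : W₂) : V) = ((σ (ρ₁ v) : W₂) : V) := fix₂ _ (σ (ρ₁ v)).2
    rw [m2]
    have hr : ρ₂ ((σ (ρ₁ v) : W₂) : V) = σ (ρ₁ v) := Subtype.ext (by
      simp only [ρ₂, LinearMap.codRestrict_apply]; exact m2)
    rw [hr, LinearEquiv.symm_apply_apply]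
    simp [ρ₁]
    rfl
  have hc2 : ∀ v, sig (f (E 0 0) (sig' v)) = g (E 0 0) v := by
    intro v
    simp only [sig, sig', LinearMap.comp_apply, Submodule.subtype_apply, LinearEquiv.coe_coe]
    have m1 : f (E 0 0) ((σ.symm (ρ₂ v) : W₁) : V) = ((σ.symm (ρ₂ v) : W₁) : V) :=
      fix₁ _ (σ.symm (ρ₂ v)).2
    rw [m1]
    have hr : ρ₁ ((σ.symm (ρ₂ v) : W₁) : V) = σ.symm (ρ₂ v) := Subtype.ext (by
      simp only [ρ₁, LinearMap.codRestrict_apply]; exact m1)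
    rw [hr, LinearEquiv.apply_symm_apply]
    simp [ρ₂]
    rfl
  let T : Module.End F V := ∑ i, g (E i 0) * sig * f (E 0 i)
  let T' : Module.End F V := ∑ i, f (E i 0) * sig' * g (E 0 i)
  have term1 : ∀ i j : Fin n,
      (f (E i 0) * sig' * g (E 0 i)) * (g (E j 0) * sig * f (E 0 j))
        = if i = j then f (E i i) else 0 := by
    intro i j
    apply LinearMap.ext; intro v
    simp only [Module.End.mul_apply]
    rcases eq_or_ne i j with rfl | hij
    · rw [show g (E 0 i) (g (E i 0) (sig (f (E 0 i) v))) = g (E 0 0) (sig (f (E 0 i) v))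
          by rw [happ]; simp]
      rw [hc1, if_pos rfl,
        show f (E 0 0) (f (E 0 i) v) = f (E 0 i) v by rw [happ]; simp,
        show f (E i 0) (f (E 0 i) v) = f (E i i) v by rw [happ]; simp]
    · rw [show g (E 0 i) (g (E j 0) (sig (f (E 0 j) v))) = 0 by rw [happ, if_neg hij]]
      simp [hij]
  have term2 : ∀ i j : Fin n,
      (g (E i 0) * sig * f (E 0 i)) * (f (E j 0) * sig' * g (E 0 j))
        = if i = j then g (E i i) else 0 := by
    intro i j
    apply LinearMap.ext; intro v
    simp only [Module.End.mul_apply]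
    rcases eq_or_ne i j with rfl | hij
    · rw [show f (E 0 i) (f (E i 0) (sig' (g (E 0 i) v))) = f (E 0 0) (sig' (g (E 0 i) v))
          by rw [happ]; simp]
      rw [hc2, if_pos rfl,
        show g (E 0 0) (g (E 0 i) v) = g (E 0 i) v by rw [happ]; simp,
        show g (E i 0) (g (E 0 i) v) = g (E i i) v by rw [happ]; simp]
    · rw [show f (E 0 i) (f (E j 0) (sig' (g (E 0 j) v))) = 0 by rw [happ, if_neg hij]]
      simp [hij]
  have hT'T : T' * T = 1 := by
    rw [show T' * T = ∑ i, ∑ j, (f (E i 0) * sig' * g (E 0 i)) * (g (E j 0) * sig * f (E 0 j))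
      from Finset.sum_mul_sum _ _ _ _]
    simp only [term1]
    rw [Finset.sum_congr rfl (fun i _ => Finset.sum_ite_eq Finset.univ i (fun _ => f (E i i)))]
    simp only [Finset.mem_univ, if_pos]
    rw [← _root_.map_sum, hsumE, _root_.map_one]
  have hTT' : T * T' = 1 := by
    rw [show T * T' = ∑ i, ∑ j, (g (E i 0) * sig * f (E 0 i)) * (f (E j 0) * sig' * g (E 0 j))
      from Finset.sum_mul_sum _ _ _ _]
    simp only [term2]
    rw [Finset.sum_congr rfl (fun i _ => Finset.sum_ite_eq Finset.univ i (fun _ => g (E i i)))]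
    simp only [Finset.mem_univ, if_pos]
    rw [← _root_.map_sum, hsumE, _root_.map_one]
  have hbase : ∀ j k, T * f (E j k) = g (E j k) * T := by
    intro j k
    apply LinearMap.ext; intro v
    simp only [T, Module.End.mul_apply, LinearMap.sum_apply, _root_.map_sum]
    have l1 : ∀ i : Fin n, i ∈ Finset.univ →
        g (E i 0) (sig (f (E 0 i) (f (E j k) v)))
          = if i = j then g (E i 0) (sig (f (E 0 k) v)) else 0 := by
      intro i _
      rw [happ]
      rcases eq_or_ne i j with rfl | hij
      · simp
      · simp [hij]
    have l2 : ∀ i : Fin n, i ∈ Finset.univ →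
        g (E j k) (g (E i 0) (sig (f (E 0 i) v)))
          = if k = i then g (E j 0) (sig (f (E 0 i) v)) else 0 := by
      intro i _
      rw [happ]
    rw [Finset.sum_congr rfl l1, Finset.sum_congr rfl l2,
      Finset.sum_ite_eq' Finset.univ j (fun i => g (E i 0) (sig (f (E 0 k) v))),
      Finset.sum_ite_eq Finset.univ k (fun i => g (E j 0) (sig (f (E 0 i) v)))]
    simp
  have hinter : ∀ a, T * f a = g a * T := by
    intro a
    have hrep : ∀ (h : Matrix (Fin n) (Fin n) F →ₐ[F] Module.End F V), h a = ∑ j, ∑ k, a j k • h (E j k) := by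
      intro h
      conv_lhs => rw [matrix_eq_sum_single a]
      rw [_root_.map_sum]
      refine Finset.sum_congr rfl fun j _ => ?_
      rw [_root_.map_sum]
      refine Finset.sum_congr rfl fun k _ => ?_
      rw [show Matrix.single j k (a j k) = a j k • E j k by
            rw [smul_single, smul_eq_mul, mul_one], _root_.map_smul]
    rw [hrep f, hrep g, Finset.mul_sum, Finset.sum_mul]
    refine Finset.sum_congr rfl fun j _ => ?_
    rw [Finset.mul_sum, Finset.sum_mul]
    refine Finset.sum_congr rfl fun k _ => ?_
    rw [mul_smul_comm, smul_mul_assoc, hbase]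
  refine ⟨LinearEquiv.ofLinear T T'
    (by rw [← Module.End.mul_eq_comp, hTT', Module.End.one_eq_id])
    (by rw [← Module.End.mul_eq_comp, hT'T, Module.End.one_eq_id]), ?_⟩
  intro a v
  have h := congrArg (fun (L : Module.End F V) => L v) (hinter a)
  simpa [Module.End.mul_apply] using h

theorem skolem_noether_matrix_extension {F : Type*} [Field F] (m n : ℕ)
    (hm : 0 < m) (hn : 0 < n)
    (ι : Matrix (Fin n) (Fin n) F →ₐ[F] Matrix (Fin (m * n)) (Fin (m * n)) F)
    (R : Type*) [Ring R] [Algebra F R]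
    (hR : Nonempty (R ≃ₐ[F] Matrix (Fin (m * n)) (Fin (m * n)) F))
    (φ : Matrix (Fin n) (Fin n) F →ₐ[F] R) :
    ∃ ψ : Matrix (Fin (m * n)) (Fin (m * n)) F ≃ₐ[F] R,
      ∀ a : Matrix (Fin n) (Fin n) F, ψ (ι a) = φ a := by
  obtain ⟨e⟩ := hR
  let V := Fin (m * n) → F
  let μ : Module.End F V ≃ₐ[F] Matrix (Fin (m * n)) (Fin (m * n)) F := algEquivMatrix'
  let f : Matrix (Fin n) (Fin n) F →ₐ[F] Module.End F V := (μ.symm.toAlgHom).comp ι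
  let g : Matrix (Fin n) (Fin n) F →ₐ[F] Module.End F V :=
    (μ.symm.toAlgHom).comp (e.toAlgHom.comp φ)
  obtain ⟨T, hT⟩ := sn_key hn V f g
  let Ψ : Module.End F V ≃ₐ[F] Module.End F V :=
    AlgEquiv.ofLinearEquiv T.conj
      (by apply LinearMap.ext; intro v; simp [LinearEquiv.conj_apply_apply])
      (by
        intro x y
        apply LinearMap.ext; intro v
        simp [LinearEquiv.conj_apply_apply, Module.End.mul_apply])
  have hΨ : ∀ a, Ψ (f a) = g a := by
    intro a
    apply LinearMap.ext; intro v
    show T.conj (f a) v = g a v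
    rw [LinearEquiv.conj_apply_apply, hT, LinearEquiv.apply_symm_apply]
  refine ⟨(μ.symm.trans Ψ).trans (μ.trans e.symm), ?_⟩
  intro a
  have h1 : μ.symm (ι a) = f a := rfl
  simp only [AlgEquiv.trans_apply, h1, hΨ]
  show e.symm (μ (μ.symm (e (φ a)))) = φ a
  rw [AlgEquiv.apply_symm_apply, AlgEquiv.symm_apply_apply]
end

section
/- Let D be a division ring and n a positive integer. Then the map a ↦ rank(a)/n on Mₙ(D), where rank(a) is the dimension of the column space of a as a right D-vector space, is a rank function on the von Neumann regular ring Mₙ(D), and it is the unique rank function on Mₙ(D). -/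
def IsVonNeumannRegular (R : Type*) [Ring R] : Prop :=
  ∀ a : R, ∃ b : R, a * b * a = a

def IsRankFunction {R : Type*} [Ring R] (ρ : R → ℝ) : Prop :=
  (∀ a : R, 0 ≤ ρ a ∧ ρ a ≤ 1) ∧
  ρ 1 = 1 ∧
  (∀ a b : R, ρ (a * b) ≤ min (ρ a) (ρ b)) ∧
  (∀ e f : R, e * e = e → f * f = f → e * f = 0 → f * e = 0 →
    ρ (e + f) = ρ e + ρ f) ∧
  (∀ a : R, a ≠ 0 → 0 < ρ a)

/-- The rank of a square matrix over a division ring: the dimension of its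
column space, viewed as a right `D`-vector space (i.e. a `Dᵐᵒᵖ`-module). -/
noncomputable def colRank {D : Type*} [DivisionRing D] {n : ℕ}
    (a : Matrix (Fin n) (Fin n) D) : ℕ :=
  Module.finrank Dᵐᵒᵖ
    (Submodule.span Dᵐᵒᵖ (Set.range fun j : Fin n => fun i : Fin n => a i j))

open MulOpposite

namespace RankAux

variable {D : Type*} [DivisionRing D] {n : ℕ}

/-- The `Dᵐᵒᵖ`-linear equivalence `(Fin n → D) ≃ (Fin n → Dᵐᵒᵖ)`. -/
def opPiEquiv (D : Type*) [DivisionRing D] (n : ℕ) :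
    (Fin n → D) ≃ₗ[Dᵐᵒᵖ] (Fin n → Dᵐᵒᵖ) where
  toFun x i := op (x i)
  invFun y i := (y i).unop
  left_inv x := by ext i; simp
  right_inv y := by ext i; simp
  map_add' x y := by ext i; simp
  map_smul' c x := by
    ext i
    simp [MulOpposite.smul_eq_mul_unop, Pi.smul_apply, smul_eq_mul]

/-- The coordinate basis of `Fin n → D` over `Dᵐᵒᵖ`. -/
noncomputable def stdBasis (D : Type*) [DivisionRing D] (n : ℕ) :
    Module.Basis (Fin n) Dᵐᵒᵖ (Fin n → D) :=
  Module.Basis.ofEquivFun (opPiEquiv D n)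

lemma stdBasis_apply (j : Fin n) : stdBasis D n j = Pi.single j (1 : D) := by
  ext i
  simp only [stdBasis, Module.Basis.coe_ofEquivFun]
  show ((opPiEquiv D n).symm (Function.update 0 j 1)) i = _
  simp only [opPiEquiv, LinearEquiv.coe_symm_mk]
  rcases eq_or_ne i j with h | h
  · subst h; simp
  · simp [Function.update_of_ne h, Pi.single_apply, h]

instance : FiniteDimensional Dᵐᵒᵖ (Fin n → D) :=
  Module.Finite.of_basis (stdBasis D n)

lemma finrank_pi_op : Module.finrank Dᵐᵒᵖ (Fin n → D) = n := by
  rw [Module.finrank_eq_card_basis (stdBasis D n), Fintype.card_fin]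

/-- Matrix action on column vectors as a `Dᵐᵒᵖ`-linear map. -/
def toEnd (a : Matrix (Fin n) (Fin n) D) : (Fin n → D) →ₗ[Dᵐᵒᵖ] (Fin n → D) where
  toFun x := a.mulVec x
  map_add' x y := by simp [Matrix.mulVec_add]
  map_smul' c x := by
    ext i
    simp only [Matrix.mulVec, dotProduct, RingHom.id_apply, Pi.smul_apply,
      MulOpposite.smul_eq_mul_unop, Finset.sum_mul]
    exact Finset.sum_congr rfl fun j _ => by rw [mul_assoc]

lemma toEnd_mul (a b : Matrix (Fin n) (Fin n) D) :
    toEnd (a * b) = (toEnd a).comp (toEnd b) := by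
  apply LinearMap.ext; intro x
  exact (Matrix.mulVec_mulVec x a b).symm

lemma toEnd_one : toEnd (1 : Matrix (Fin n) (Fin n) D) = LinearMap.id := by
  apply LinearMap.ext; intro x
  exact Matrix.one_mulVec x

lemma toEnd_single (a : Matrix (Fin n) (Fin n) D) (j : Fin n) :
    toEnd a (Pi.single j 1) = fun i => a i j := by
  ext i
  simp [toEnd, Matrix.mulVec, dotProduct, Pi.single_apply]

lemma sum_op_smul_single (x : Fin n → D) :
    ∑ j, op (x j) • Pi.single j (1:D) = x := by
  ext i
  simp [Finset.sum_apply, MulOpposite.smul_eq_mul_unop, Pi.single_apply]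

/-- Any `Dᵐᵒᵖ`-endomorphism of `Fin n → D` comes from a matrix. -/
lemma toEnd_eq (φ : (Fin n → D) →ₗ[Dᵐᵒᵖ] (Fin n → D)) :
    toEnd (Matrix.of fun i j => φ (Pi.single j 1) i) = φ := by
  apply LinearMap.ext; intro x
  conv_rhs => rw [← sum_op_smul_single x]
  rw [map_sum]
  ext i
  simp only [toEnd, LinearMap.coe_mk, AddHom.coe_mk, Matrix.mulVec, dotProduct,
    Matrix.of_apply, Finset.sum_apply, map_smul, Pi.smul_apply,
    MulOpposite.smul_eq_mul_unop, unop_op]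

lemma toEnd_injective :
    Function.Injective (toEnd (D := D) (n := n)) := by
  intro a b h
  ext i j
  have h1 := congrArg (fun ψ : (Fin n → D) →ₗ[Dᵐᵒᵖ] (Fin n → D) =>
    ψ (Pi.single j 1) i) h
  simpa [toEnd_single] using h1

lemma range_toEnd (a : Matrix (Fin n) (Fin n) D) :
    LinearMap.range (toEnd a)
      = Submodule.span Dᵐᵒᵖ (Set.range fun j : Fin n => fun i : Fin n => a i j) := by
  apply le_antisymm
  · rintro - ⟨x, rfl⟩
    have : toEnd a x = ∑ j, op (x j) • (fun i => a i j) := by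
      ext i
      simp [toEnd, Matrix.mulVec, dotProduct, Finset.sum_apply,
        MulOpposite.smul_eq_mul_unop]
    rw [this]
    exact Submodule.sum_mem _ fun j _ =>
      Submodule.smul_mem _ _ (Submodule.subset_span ⟨j, rfl⟩)
  · rw [Submodule.span_le]
    rintro - ⟨j, rfl⟩
    exact ⟨Pi.single j 1, toEnd_single a j⟩

lemma colRank_eq (a : Matrix (Fin n) (Fin n) D) :
    colRank a = Module.finrank Dᵐᵒᵖ (LinearMap.range (toEnd a)) := by
  rw [colRank, range_toEnd]

lemma colRank_le (a : Matrix (Fin n) (Fin n) D) : colRank a ≤ n := by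
  rw [colRank_eq]
  simpa [finrank_pi_op] using Submodule.finrank_le (LinearMap.range (toEnd a))

lemma colRank_one : colRank (1 : Matrix (Fin n) (Fin n) D) = n := by
  rw [colRank_eq, toEnd_one, LinearMap.range_id, finrank_top, finrank_pi_op]

lemma colRank_mul_le_left (a b : Matrix (Fin n) (Fin n) D) :
    colRank (a * b) ≤ colRank a := by
  rw [colRank_eq, colRank_eq, toEnd_mul]
  exact Submodule.finrank_mono (LinearMap.range_comp_le_range _ _)

lemma colRank_mul_le_right (a b : Matrix (Fin n) (Fin n) D) :
    colRank (a * b) ≤ colRank b := by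
  rw [colRank_eq, colRank_eq, toEnd_mul, LinearMap.range_comp]
  exact Submodule.finrank_map_le _ _

lemma colRank_pos {a : Matrix (Fin n) (Fin n) D} (ha : a ≠ 0) :
    0 < colRank a := by
  rw [colRank_eq]
  rcases Nat.eq_zero_or_pos (Module.finrank Dᵐᵒᵖ (LinearMap.range (toEnd a))) with h | h
  · exfalso
    apply ha
    have hb : LinearMap.range (toEnd a) = ⊥ := Submodule.finrank_eq_zero.mp h
    apply toEnd_injective
    apply LinearMap.ext; intro x
    have hx : toEnd a x ∈ (⊥ : Submodule Dᵐᵒᵖ (Fin n → D)) := hb ▸ LinearMap.mem_range_self _ x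
    rw [Submodule.mem_bot] at hx
    rw [hx]
    show (0 : Fin n → D) = (0 : Matrix (Fin n) (Fin n) D).mulVec x
    simp [Matrix.zero_mulVec]
  · exact h

/-- Fixed points of an idempotent endomorphism are exactly its range. -/
lemma idem_fix {φ : (Fin n → D) →ₗ[Dᵐᵒᵖ] (Fin n → D)} (hφ : φ ∘ₗ φ = φ)
    {y : Fin n → D} (hy : y ∈ LinearMap.range φ) : φ y = y := by
  obtain ⟨x, rfl⟩ := hy
  exact LinearMap.congr_fun hφ x

/-- Von Neumann regularity at the level of endomorphisms. -/
lemma end_regular (φ : (Fin n → D) →ₗ[Dᵐᵒᵖ] (Fin n → D)) :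
    ∃ ψ : (Fin n → D) →ₗ[Dᵐᵒᵖ] (Fin n → D), φ ∘ₗ ψ ∘ₗ φ = φ := by
  obtain ⟨g, hg⟩ :=
    φ.rangeRestrict.exists_rightInverse_of_surjective φ.range_rangeRestrict
  obtain ⟨q, hq⟩ := Submodule.exists_isCompl (LinearMap.range φ)
  let π := (LinearMap.range φ).linearProjOfIsCompl q hq
  refine ⟨g ∘ₗ π, ?_⟩
  apply LinearMap.ext; intro x
  have h1 : π (φ x) = ⟨φ x, LinearMap.mem_range_self φ x⟩ :=
    Submodule.linearProjOfIsCompl_apply_left hq ⟨φ x, LinearMap.mem_range_self φ x⟩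
  have h2 : ∀ y : LinearMap.range φ, φ (g y) = (y : Fin n → D) := by
    intro y
    have := LinearMap.congr_fun hg y
    have : φ.rangeRestrict (g y) = y := this
    exact congrArg Subtype.val this
  simp only [LinearMap.comp_apply, h1, h2]

lemma matrix_regular (a : Matrix (Fin n) (Fin n) D) :
    ∃ b : Matrix (Fin n) (Fin n) D, a * b * a = a := by
  obtain ⟨ψ, hψ⟩ := end_regular (toEnd a)
  refine ⟨Matrix.of fun i j => ψ (Pi.single j 1) i, toEnd_injective ?_⟩
  rw [toEnd_mul, toEnd_mul, toEnd_eq]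
  exact hψ

/-- Additivity of the rank on orthogonal idempotent matrices. -/
lemma colRank_add_orth {e f : Matrix (Fin n) (Fin n) D}
    (he : e * e = e) (hf : f * f = f) (hef : e * f = 0) (hfe : f * e = 0) :
    colRank (e + f) = colRank e + colRank f := by
  set φ := toEnd e with hφdef
  set ψ := toEnd f with hψdef
  have hφ : φ ∘ₗ φ = φ := by rw [hφdef, ← toEnd_mul, he]
  have hψ : ψ ∘ₗ ψ = ψ := by rw [hψdef, ← toEnd_mul, hf]
  have hφψ : φ ∘ₗ ψ = 0 := by rw [hφdef, hψdef, ← toEnd_mul, hef]; apply LinearMap.ext; intro x; simp [toEnd, Matrix.zero_mulVec]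
  have hψφ : ψ ∘ₗ φ = 0 := by rw [hφdef, hψdef, ← toEnd_mul, hfe]; apply LinearMap.ext; intro x; simp [toEnd, Matrix.zero_mulVec]
  have hsum : toEnd (e + f) = φ + ψ := by
    apply LinearMap.ext; intro x
    exact Matrix.add_mulVec e f x
  have hrange : LinearMap.range (φ + ψ) = LinearMap.range φ ⊔ LinearMap.range ψ := by
    apply le_antisymm
    · rintro - ⟨x, rfl⟩
      exact Submodule.add_mem_sup (LinearMap.mem_range_self φ x) (LinearMap.mem_range_self ψ x)
    · rw [sup_le_iff]
      constructor
      · rintro - ⟨x, rfl⟩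
        refine ⟨φ x, ?_⟩
        have h1 : φ (φ x) = φ x := LinearMap.congr_fun hφ x
        have h2 : ψ (φ x) = 0 := LinearMap.congr_fun hψφ x
        simp [h1, h2]
      · rintro - ⟨x, rfl⟩
        refine ⟨ψ x, ?_⟩
        have h1 : ψ (ψ x) = ψ x := LinearMap.congr_fun hψ x
        have h2 : φ (ψ x) = 0 := LinearMap.congr_fun hφψ x
        simp [h1, h2]
  have hinf : LinearMap.range φ ⊓ LinearMap.range ψ = ⊥ := by
    rw [Submodule.eq_bot_iff]
    rintro y ⟨hy1, hy2⟩
    have h1 : φ y = y := idem_fix hφ hy1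
    have h2 : ψ y = y := idem_fix hψ hy2
    have : φ (ψ y) = 0 := LinearMap.congr_fun hφψ y
    rw [h2, h1] at this
    exact this
  have := Submodule.finrank_sup_add_finrank_inf_eq (LinearMap.range φ) (LinearMap.range ψ)
  rw [hinf, finrank_bot, add_zero] at this
  rw [colRank_eq, colRank_eq, colRank_eq, hsum, hrange, ← hφdef, ← hψdef, this]

/-- the diagonal idempotent supported on a finite set of indices -/
noncomputable def diagIdem (D : Type*) [DivisionRing D] {n : ℕ} (s : Finset (Fin n)) :
    Matrix (Fin n) (Fin n) D :=
  ∑ j ∈ s, Matrix.single j j 1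

lemma diagIdem_apply (s : Finset (Fin n)) (i j : Fin n) :
    diagIdem D s i j = if i = j ∧ j ∈ s then 1 else 0 := by
  rw [diagIdem]
  have : ∀ k : Fin n, Matrix.single k k (1:D) i j
      = if k = i ∧ k = j then 1 else 0 := fun k => rfl
  rw [Matrix.sum_apply]
  simp only [this]
  rcases eq_or_ne i j with h | h
  · subst h
    by_cases hi : i ∈ s
    · rw [Finset.sum_eq_single i (fun k _ hk => by simp [hk]) (fun h => absurd hi h)]
      simp [hi]
    · rw [Finset.sum_eq_zero]
      · simp [hi]
      · intro k hk
        rcases eq_or_ne k i with rfl | hne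
        · exact absurd hk hi
        · simp [hne]
  · rw [Finset.sum_eq_zero]
    · simp [fun hh : i = j => h hh]
    · intro k _
      rcases eq_or_ne k i with rfl | hne
      · simp [fun hh : k = j => h hh]
      · simp [hne]

lemma diagIdem_univ : diagIdem D (Finset.univ : Finset (Fin n)) = 1 := by
  ext i j
  rw [diagIdem_apply]
  simp [Matrix.one_apply]

lemma diagIdem_mul (s t : Finset (Fin n)) :
    diagIdem D s * diagIdem D t = diagIdem D (s ∩ t) := by
  ext i j
  rw [Matrix.mul_apply, diagIdem_apply]
  rw [Finset.sum_eq_single j]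
  · rw [diagIdem_apply, diagIdem_apply]
    by_cases h1 : i = j <;> by_cases h2 : j ∈ s <;> by_cases h3 : j ∈ t <;>
      simp [h1, h2, h3, Finset.mem_inter]
  · intro k _ hk
    rw [diagIdem_apply t]
    simp [hk]
  · intro h
    exact absurd (Finset.mem_univ j) h

lemma diagIdem_idem (s : Finset (Fin n)) :
    diagIdem D s * diagIdem D s = diagIdem D s := by
  rw [diagIdem_mul, Finset.inter_self]

lemma diagIdem_empty : diagIdem D (∅ : Finset (Fin n)) = 0 := by
  ext i j
  rw [diagIdem_apply]
  simp

lemma colRank_diagIdem (s : Finset (Fin n)) : colRank (diagIdem D s) = s.card := by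
  have hcol : ∀ j ∈ s, (fun i => diagIdem D s i j) = Pi.single j (1:D) := by
    intro j hj
    ext i
    rw [diagIdem_apply]
    simp [Pi.single_apply, hj]
  have hspan : Submodule.span Dᵐᵒᵖ
        (Set.range fun j : Fin n => fun i : Fin n => diagIdem D s i j)
      = Submodule.span Dᵐᵒᵖ ((fun j => Pi.single j (1:D)) '' (s : Set (Fin n))) := by
    apply le_antisymm
    · rw [Submodule.span_le]
      rintro - ⟨j, rfl⟩
      by_cases hj : j ∈ s
      · exact Submodule.subset_span ⟨j, hj, (hcol j hj).symm⟩
      · have h0 : (fun i => diagIdem D s i j) = 0 := by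
          ext i
          rw [diagIdem_apply]
          simp [hj]
        show (fun i => diagIdem D s i j) ∈ _
        rw [h0]
        exact Submodule.zero_mem _
    · rw [Submodule.span_le]
      rintro - ⟨j, hj, rfl⟩
      exact Submodule.subset_span ⟨j, hcol j hj⟩
  rw [colRank, hspan, Set.image_eq_range]
  have hli : LinearIndependent Dᵐᵒᵖ
      (fun j : (s : Set (Fin n)) => (Pi.single (j : Fin n) (1:D) : Fin n → D)) := by
    have h := (stdBasis D n).linearIndependent.comp
      ((↑) : ↥(↑s : Set (Fin n)) → Fin n) Subtype.val_injective
    have : (stdBasis D n ∘ ((↑) : ↥(↑s : Set (Fin n)) → Fin n))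
        = fun j : (s : Set (Fin n)) => (Pi.single (j : Fin n) (1:D) : Fin n → D) := by
      funext j
      exact stdBasis_apply (j : Fin n)
    rwa [this] at h
  rw [finrank_span_eq_card hli]
  simp

/-- Two idempotent matrices of equal rank get equal values under any rank function:
they are algebraically equivalent. -/
lemma exists_equivalence {e f : Matrix (Fin n) (Fin n) D}
    (he : e * e = e) (hf : f * f = f) (hr : colRank e = colRank f) :
    ∃ a b : Matrix (Fin n) (Fin n) D,
      a * b = e ∧ b * a = f ∧ e * a = a ∧ f * b = b := by
  set φ := toEnd e with hφdef
  set ψ := toEnd f with hψdef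
  have hφ : φ ∘ₗ φ = φ := by rw [hφdef, ← toEnd_mul, he]
  have hψ : ψ ∘ₗ ψ = ψ := by rw [hψdef, ← toEnd_mul, hf]
  have hfr : Module.finrank Dᵐᵒᵖ (LinearMap.range ψ)
      = Module.finrank Dᵐᵒᵖ (LinearMap.range φ) := by
    rw [← colRank_eq, ← colRank_eq, hr]
  obtain ⟨θ⟩ := FiniteDimensional.nonempty_linearEquiv_of_finrank_eq hfr
  set A : (Fin n → D) →ₗ[Dᵐᵒᵖ] (Fin n → D) :=
    (LinearMap.range φ).subtype ∘ₗ (θ : LinearMap.range ψ →ₗ[Dᵐᵒᵖ] LinearMap.range φ) ∘ₗ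
      ψ.rangeRestrict with hA
  set B : (Fin n → D) →ₗ[Dᵐᵒᵖ] (Fin n → D) :=
    (LinearMap.range ψ).subtype ∘ₗ
      (θ.symm : LinearMap.range φ →ₗ[Dᵐᵒᵖ] LinearMap.range ψ) ∘ₗ φ.rangeRestrict with hB
  have hAmem : ∀ x, A x ∈ LinearMap.range φ := fun x => (θ (ψ.rangeRestrict x)).2
  have hBmem : ∀ x, B x ∈ LinearMap.range ψ := fun x => (θ.symm (φ.rangeRestrict x)).2
  have hAB : A ∘ₗ B = φ := by
    apply LinearMap.ext; intro x
    have h1 : ψ.rangeRestrict (B x) = θ.symm (φ.rangeRestrict x) := by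
      apply Subtype.ext
      exact idem_fix hψ (hBmem x)
    show A (B x) = φ x
    rw [hA]
    simp only [LinearMap.comp_apply, Submodule.coe_subtype]
    rw [h1]
    have h2 : (θ : LinearMap.range ψ →ₗ[Dᵐᵒᵖ] LinearMap.range φ) (θ.symm (φ.rangeRestrict x))
        = φ.rangeRestrict x := by
      simp
    rw [h2]
    rfl
  have hBA : B ∘ₗ A = ψ := by
    apply LinearMap.ext; intro x
    have h1 : φ.rangeRestrict (A x) = θ (ψ.rangeRestrict x) := by
      apply Subtype.ext
      exact idem_fix hφ (hAmem x)
    show B (A x) = ψ x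
    rw [hB]
    simp only [LinearMap.comp_apply, Submodule.coe_subtype]
    rw [h1]
    have h2 : (θ.symm : LinearMap.range φ →ₗ[Dᵐᵒᵖ] LinearMap.range ψ) (θ (ψ.rangeRestrict x))
        = ψ.rangeRestrict x := by
      simp
    rw [h2]
    rfl
  have hφA : φ ∘ₗ A = A := by
    apply LinearMap.ext; intro x
    exact idem_fix hφ (hAmem x)
  have hψB : ψ ∘ₗ B = B := by
    apply LinearMap.ext; intro x
    exact idem_fix hψ (hBmem x)
  refine ⟨Matrix.of fun i j => A (Pi.single j 1) i, Matrix.of fun i j => B (Pi.single j 1) i,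
    toEnd_injective ?_, toEnd_injective ?_, toEnd_injective ?_, toEnd_injective ?_⟩
  · rw [toEnd_mul, toEnd_eq, toEnd_eq]; exact hAB
  · rw [toEnd_mul, toEnd_eq, toEnd_eq]; exact hBA
  · rw [toEnd_mul, toEnd_eq]; exact hφA
  · rw [toEnd_mul, toEnd_eq]; exact hψB

end RankAux

open RankAux in
theorem matrix_rank_function_unique {D : Type*} [DivisionRing D] (n : ℕ)
    (hn : 0 < n) :
    IsVonNeumannRegular (Matrix (Fin n) (Fin n) D) ∧
    IsRankFunction (fun a : Matrix (Fin n) (Fin n) D => (colRank a : ℝ) / n) ∧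
    (∀ ρ : Matrix (Fin n) (Fin n) D → ℝ, IsRankFunction ρ →
      ρ = fun a => (colRank a : ℝ) / n) := by
  have hn' : (0:ℝ) < n := by exact_mod_cast hn
  refine ⟨matrix_regular, ⟨?_, ?_, ?_, ?_, ?_⟩, ?_⟩
  · intro a
    constructor
    · positivity
    · rw [div_le_one hn']
      exact_mod_cast colRank_le a
  · show (colRank (1 : Matrix (Fin n) (Fin n) D) : ℝ) / n = 1
    rw [colRank_one, div_self (ne_of_gt hn')]
  · intro a b
    rw [le_min_iff]
    constructor
    · show (colRank (a * b) : ℝ) / n ≤ (colRank a : ℝ) / n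
      gcongr
      exact_mod_cast colRank_mul_le_left a b
    · show (colRank (a * b) : ℝ) / n ≤ (colRank b : ℝ) / n
      gcongr
      exact_mod_cast colRank_mul_le_right a b
  · intro e f he hf hef hfe
    show (colRank (e + f) : ℝ) / n = (colRank e : ℝ) / n + (colRank f : ℝ) / n
    rw [colRank_add_orth he hf hef hfe]
    push_cast
    ring
  · intro a ha
    exact div_pos (by exact_mod_cast colRank_pos ha) hn'
  · intro ρ hρ
    obtain ⟨hbd, hone, hmul, hadd, hpos⟩ := hρ
    -- ρ vanishes at 0
    have hzero : ρ 0 = 0 := by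
      have h := hadd 0 0 (by simp) (by simp) (by simp) (by simp)
      simp only [add_zero] at h
      linarith
    -- two idempotents of equal rank have the same ρ-value
    have hkey : ∀ e f : Matrix (Fin n) (Fin n) D, e * e = e → f * f = f →
        colRank e = colRank f → ρ e = ρ f := by
      intro e f he hf hr
      obtain ⟨a, b, hab, hba, hea, hfb⟩ := exists_equivalence he hf hr
      have h1 : ρ e ≤ ρ f := by
        calc ρ e = ρ (a * b) := by rw [hab]
        _ ≤ ρ b := (hmul a b).trans (min_le_right _ _)
        _ = ρ (f * b) := by rw [hfb]
        _ ≤ ρ f := (hmul f b).trans (min_le_left _ _)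
      have h2 : ρ f ≤ ρ e := by
        calc ρ f = ρ (b * a) := by rw [hba]
        _ ≤ ρ a := (hmul b a).trans (min_le_right _ _)
        _ = ρ (e * a) := by rw [hea]
        _ ≤ ρ e := (hmul e a).trans (min_le_left _ _)
      linarith
    -- value on diagonal idempotents
    set c : ℝ := ρ (diagIdem D {⟨0, hn⟩}) with hc
    have hdiag : ∀ s : Finset (Fin n), ρ (diagIdem D s) = s.card * c := by
      intro s
      induction s using Finset.induction_on with
      | empty => simp [diagIdem_empty, hzero]
      | @insert j s hj ih =>
        have hsplit : diagIdem D (insert j s) = diagIdem D {j} + diagIdem D s := by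
          rw [diagIdem, diagIdem, diagIdem, Finset.sum_insert hj, Finset.sum_singleton]
        have horth1 : diagIdem D {j} * diagIdem D s = 0 := by
          rw [diagIdem_mul]
          have : ({j} : Finset (Fin n)) ∩ s = ∅ := by
            rw [Finset.singleton_inter_of_notMem hj]
          rw [this, diagIdem_empty]
        have horth2 : diagIdem D s * diagIdem D {j} = 0 := by
          rw [diagIdem_mul]
          have : s ∩ ({j} : Finset (Fin n)) = ∅ := by
            rw [Finset.inter_singleton_of_notMem hj]
          rw [this, diagIdem_empty]
        have hEj : ρ (diagIdem D {j}) = c := by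
          rw [hc]
          exact hkey _ _ (diagIdem_idem _) (diagIdem_idem _)
            (by rw [colRank_diagIdem, colRank_diagIdem]; simp)
        rw [hsplit, hadd _ _ (diagIdem_idem _) (diagIdem_idem _) horth1 horth2, hEj, ih,
          Finset.card_insert_of_notMem hj]
        push_cast
        ring
    -- compute c
    have hcval : c = 1 / n := by
      have h := hdiag Finset.univ
      rw [diagIdem_univ, hone, Finset.card_univ, Fintype.card_fin] at h
      field_simp
      linear_combination -h
    -- value on all idempotents
    have hidem : ∀ e : Matrix (Fin n) (Fin n) D, e * e = e →
        ρ e = (colRank e : ℝ) / n := by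
      intro e he
      obtain ⟨s, -, hs⟩ := Finset.exists_subset_card_eq
        (s := (Finset.univ : Finset (Fin n))) (n := colRank e)
        (by simpa [Finset.card_univ] using colRank_le e)
      have := hkey e (diagIdem D s) he (diagIdem_idem s)
        (by rw [colRank_diagIdem, hs])
      rw [this, hdiag s, hs, hcval]
      ring
    -- conclude
    funext a
    obtain ⟨b, hb⟩ := matrix_regular a
    set e := b * a with hedef
    have he : e * e = e := by
      rw [hedef]
      calc b * a * (b * a) = b * (a * b * a) := by simp only [mul_assoc]
      _ = b * a := by rw [hb]
    have hae : a * e = a := by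
      rw [hedef, ← mul_assoc, hb]
    have h1 : ρ a = ρ e := by
      have hle1 : ρ e ≤ ρ a := (hmul b a).trans (min_le_right _ _)
      have hle2 : ρ a ≤ ρ e := by
        conv_lhs => rw [← hae]
        exact (hmul a e).trans (min_le_right _ _)
      linarith
    have h2 : colRank e = colRank a := by
      have hle1 : colRank e ≤ colRank a := colRank_mul_le_right b a
      have hle2 : colRank a ≤ colRank e := by
        conv_lhs => rw [← hae]
        exact colRank_mul_le_right a e
      omega
    rw [h1, hidem e he, h2]
end
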